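/- If α ⊆ ℝ^d is a floral arrangement determined by a signed SPD (Δ,s) with k edges, then τ_d(α) (the sum of signs of occupied orthants) equals τ(Δ,s) if k = d, and equals 0 if k < d. -/

import Mathlib

open scoped BigOperators

/-- A signed, edge-labeled series-parallel diagram with labels in `Fin d`. -/
inductive LSPD (d : ℕ) : Type
  | edge (i : Fin d) (sign : Bool)
  | series (a b : LSPD d)
  | parallel (a b : LSPD d)

namespace LSPD

variable {d : ℕ}

/-- the set of edge labels used -/
def edges : LSPD d → Finset (Fin d)
  | edge i _ => {i}
  | series a b => a.edges ∪ b.edges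
  | parallel a b => a.edges ∪ b.edges

/-- read-once: every variable (edge label) is used at most once -/
def ReadOnce : LSPD d → Prop
  | edge _ _ => True
  | series a b => a.ReadOnce ∧ b.ReadOnce ∧ Disjoint a.edges b.edges
  | parallel a b => a.ReadOnce ∧ b.ReadOnce ∧ Disjoint a.edges b.edges

/-- total number of edges -/
def numEdges : LSPD d → ℕ
  | edge _ _ => 1
  | series a b => a.numEdges + b.numEdges
  | parallel a b => a.numEdges + b.numEdges

/-- the floral arrangement: series = intersection, parallel = union,
    the edge `i` with sign `±` is the half-space `±H_i = {x : ±x_i ≥ 0}` -/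
def toSet : LSPD d → Set (Fin d → ℝ)
  | edge i s => {x | if s then 0 ≤ x i else x i ≤ 0}
  | series a b => a.toSet ∩ b.toSet
  | parallel a b => a.toSet ∪ b.toSet

/-- signed volume `τ`: 1 on a positive edge, multiplicative under series
    connection, and `τ(Δ̄,-s) = -τ(Δ,s)` -/
def tau : LSPD d → ℤ
  | edge _ s => if s then 1 else -1
  | series a b => a.tau * b.tau
  | parallel a b => -(a.tau * b.tau)

/-- bouquet sign `σ(Δ) = (-1)^{e(Δ)-v(Δ)+1}` (multiplicative under series,
    anti-multiplicative under parallel) -/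
def sigma : LSPD d → ℤ
  | edge _ _ => 1
  | series a b => a.sigma * b.sigma
  | parallel a b => -(a.sigma * b.sigma)

/-- volume statistic `μ`: 1 on an edge, multiplicative under series connection,
    and `μ(Δ̄) = 2^d - μ(Δ)` -/
def mu : LSPD d → ℤ
  | edge _ _ => 1
  | series a b => a.mu * b.mu
  | parallel a b =>
      2 ^ (a.numEdges + b.numEdges) - (2 ^ a.numEdges - a.mu) * (2 ^ b.numEdges - b.mu)

/-- a floral vertex on `d` half-spaces: a read-once diagram using all `d` labels -/
def IsFloral (Δ : LSPD d) : Prop := Δ.ReadOnce ∧ Δ.edges = Finset.univ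

end LSPD

variable {d : ℕ}

/-- the closed orthant of `ℝ^d` indexed by a sign vector -/
def orthant (s : Fin d → Bool) : Set (Fin d → ℝ) :=
  {x | ∀ i, if s i then 0 ≤ x i else x i ≤ 0}

/-- the sign `(-1)^s` of an orthant -/
def orthSign (s : Fin d → Bool) : ℤ := ∏ i, (if s i then 1 else -1)

/-- the orthants occupied by (i.e. contained in) a subset of `ℝ^d` -/
def occ (α : Set (Fin d → ℝ)) : Set (Fin d → Bool) := {s | orthant s ⊆ α}

/-- a local orthotopal arrangement: a union of closed orthants -/
def IsLocalArrangement (α : Set (Fin d → ℝ)) : Prop :=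
  ∃ A : Finset (Fin d → Bool), α = ⋃ s ∈ A, orthant s

/-- a pure d-dimensional axis-aligned box -/
def IsBox (B : Set (Fin d → ℝ)) : Prop :=
  ∃ a b : Fin d → ℝ, (∀ i, a i < b i) ∧ B = Set.Icc a b

/-- a possibly degenerate axis-aligned box -/
def IsWeakBox (B : Set (Fin d → ℝ)) : Prop :=
  ∃ a b : Fin d → ℝ, (∀ i, a i ≤ b i) ∧ B = Set.Icc a b

/-- a pure d-dimensional orthogonal polytope: finite union of pure boxes -/
def IsOrthotope (P : Set (Fin d → ℝ)) : Prop :=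
  ∃ S : Finset (Set (Fin d → ℝ)), (∀ B ∈ S, IsBox B) ∧ P = ⋃ B ∈ S, B

/-- a finite union of (possibly degenerate) boxes -/
def IsPolybox (P : Set (Fin d → ℝ)) : Prop :=
  ∃ S : Finset (Set (Fin d → ℝ)), (∀ B ∈ S, IsWeakBox B) ∧ P = ⋃ B ∈ S, B

/-- `α` is the tangent cone of `P` at `v`:
    `P ∩ (v + [-δ,δ]^d) = v + (α ∩ [-δ,δ]^d)` for some `δ > 0` -/
def IsTangentCone (P : Set (Fin d → ℝ)) (v : Fin d → ℝ) (α : Set (Fin d → ℝ)) : Prop :=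
  ∃ δ : ℝ, 0 < δ ∧
    P ∩ Set.Icc (fun i => v i - δ) (fun i => v i + δ) =
      (fun x => v + x) '' (α ∩ Set.Icc (fun _ => -δ) (fun _ => δ))

/-- a vertex (singular point) of `P`: a boundary point whose tangent cone is
    invariant under translation in no coordinate direction -/
def IsVertex (P : Set (Fin d → ℝ)) (v : Fin d → ℝ) : Prop :=
  v ∈ P ∧ v ∈ frontier P ∧ ∃ α, IsTangentCone P v α ∧
    ∀ i : Fin d, ∃ t : ℝ, (fun x : Fin d → ℝ => x + t • (Pi.single i 1 : Fin d → ℝ)) '' α ≠ α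

/-- a generic orthotope: an orthogonal polytope all of whose singular points
    are floral vertices on `d` half-spaces -/
def IsGenericOrthotope (P : Set (Fin d → ℝ)) : Prop :=
  IsOrthotope P ∧ ∀ v, IsVertex P v → ∃ Δ : LSPD d, Δ.IsFloral ∧ IsTangentCone P v Δ.toSet

/-- number of vertices of `P` whose tangent cone occupies exactly `k` orthants -/
noncomputable def vertexOccCount (P : Set (Fin d → ℝ)) (k : ℕ) : ℕ :=
  Set.ncard {v | IsVertex P v ∧ ∃ α, IsTangentCone P v α ∧ (occ α).ncard = k}

/-- an edge of the 1-skeleton: a segment parallel to a coordinate axis joining two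
    vertices, whose relative interior points share a common tangent cone -/
def IsEdge (P : Set (Fin d → ℝ)) (v w : Fin d → ℝ) : Prop :=
  IsVertex P v ∧ IsVertex P w ∧ v ≠ w ∧ (∃ i : Fin d, ∀ j, j ≠ i → v j = w j) ∧
    ∃ α, ∀ u ∈ segment ℝ v w, u ≠ v → u ≠ w → IsTangentCone P u α

/-- the axis-aligned hyperplane `x_i = lam` supports `P`: it contains a facet of `P`,
    i.e. some boundary point has a neighborhood whose boundary lies in the hyperplane -/
def IsSupportingHyperplane (P : Set (Fin d → ℝ)) (i : Fin d) (lam : ℝ) : Prop :=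
  ∃ x ∈ frontier P, x i = lam ∧ ∃ δ : ℝ, 0 < δ ∧
    ∀ y ∈ frontier P, (∀ j, |y j - x j| ≤ δ) → y i = lam

/-- an integral orthotope (pure d-dimensional): a finite union of lattice unit cubes -/
def IsIntegralOrthotope (P : Set (Fin d → ℝ)) : Prop :=
  ∃ S : Finset (Fin d → ℤ),
    P = ⋃ v ∈ S, Set.Icc (fun i => (v i : ℝ)) (fun i => (v i : ℝ) + 1)

/-- a rational orthotope: some positive integer multiple is integral -/
def IsRationalOrthotope (P : Set (Fin d → ℝ)) : Prop :=
  ∃ n : ℕ, 0 < n ∧ IsIntegralOrthotope ((fun x : Fin d → ℝ => (n : ℝ) • x) '' P)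

/-!
An orthant `s` lies in the floral arrangement iff the read-once Boolean formula of the diagram
holds at `s`, so `τ_d(α) = Σ_s [Δ(s)] ∏_i ±1`. If some coordinate `j` carries no edge, flipping
`s_j` is a sign-reversing involution and the sum vanishes. Otherwise induct on the diagram with
the normalised coefficients `2^{-d} Σ_s [Δ(s)] ∏_{i ∈ E(Δ)} ±1 = 2^{-|E(Δ)|} τ(Δ)`: a series
connection multiplies them, the two factors depending on disjoint sets of coordinates; for a
parallel connection, inclusion–exclusion `[a ∨ b] = [a] + [b] - [a][b]` leaves only `-[a][b]`,
since each single term misses the sign of an edge of the other factor and is killed by flipping it.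
-/

section BooleanCube

variable {ι : Type*}

def boolSign (b : Bool) : ℤ := if b then 1 else -1

def signChar (E : Finset ι) (s : ι → Bool) : ℤ := ∏ i ∈ E, boolSign (s i)

lemma signChar_dependsOn (E : Finset ι) : DependsOn (signChar E) E :=
  fun _ _ h => Finset.prod_congr rfl fun i hi => by rw [h i hi]

lemma signChar_union [DecidableEq ι] {A B : Finset ι} (hAB : Disjoint A B) (s : ι → Bool) :
    signChar (A ∪ B) s = signChar A s * signChar B s :=
  Finset.prod_union hAB

lemma signChar_update_not [DecidableEq ι] {E : Finset ι} {j : ι} (hj : j ∈ E) (s : ι → Bool) :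
    signChar E (Function.update s j (!s j)) = -signChar E s := by
  have hrest : ∀ i ∈ E.erase j, boolSign (Function.update s j (!s j) i) = boolSign (s i) :=
    fun i hi => by rw [Function.update_of_ne (Finset.ne_of_mem_erase hi)]
  unfold signChar
  rw [← Finset.mul_prod_erase E _ hj, ← Finset.mul_prod_erase E _ hj, Finset.prod_congr rfl hrest,
    Function.update_self]
  cases s j <;> simp [boolSign]

/-- Flipping a coordinate `j ∈ E` on which `f` does not depend changes the sign of the summand. -/
theorem sum_mul_signChar_eq_zero [Fintype ι] [DecidableEq ι] {f : (ι → Bool) → ℤ} {A : Set ι}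
    (hf : DependsOn f A) {E : Finset ι} {j : ι} (hjE : j ∈ E) (hjA : j ∉ A) :
    ∑ s, f s * signChar E s = 0 := by
  refine Finset.sum_ninvolution (fun s => Function.update s j (!s j)) (fun s => ?_)
    (fun s _ h => ?_) (fun _ => Finset.mem_univ _) (fun s => ?_)
  · have hfs : f (Function.update s j (!s j)) = f s :=
      hf fun i hi => Function.update_of_ne (ne_of_mem_of_not_mem hi hjA) _ _
    rw [hfs, signChar_update_not hjE]
    ring
  · simpa using congrFun h j
  · simp

/-- Swapping the `A`-coordinates of `x` and `y` is an involution of `(ι → β) × (ι → β)` turning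
`f x * g y` into `f x * g x`. -/
theorem sum_mul_sum_of_dependsOn_of_disjoint [Fintype ι] [DecidableEq ι] {β R : Type*} [Fintype β]
    [CommSemiring R] {f g : (ι → β) → R} {A B : Set ι} (hf : DependsOn f A) (hg : DependsOn g B)
    (hAB : Disjoint A B) :
    (∑ x, f x) * ∑ x, g x = Fintype.card (ι → β) * ∑ x, f x * g x := by
  classical
  let swap : (ι → β) × (ι → β) → (ι → β) × (ι → β) :=
    fun p => (A.piecewise p.1 p.2, A.piecewise p.2 p.1)
  have hswap : Function.Involutive swap := fun p => by
    ext i <;> by_cases hi : i ∈ A <;> simp [swap, hi]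
  have hfg : ∀ p, f (swap p).1 * g (swap p).2 = f p.1 * g p.1 := fun p => by
    rw [hf fun i hi => Set.piecewise_eq_of_mem _ _ _ hi,
      hg fun i hi => Set.piecewise_eq_of_notMem _ _ _ (hAB.notMem_of_mem_right hi)]
  calc (∑ x, f x) * ∑ x, g x = ∑ p : (ι → β) × (ι → β), f p.1 * g p.2 := by
        rw [Finset.sum_mul_sum, ← Fintype.sum_prod_type']
    _ = ∑ p : (ι → β) × (ι → β), f (swap p).1 * g (swap p).2 :=
        (Equiv.sum_comp hswap.toPerm fun p => f p.1 * g p.2).symm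
    _ = ∑ p : (ι → β) × (ι → β), f p.1 * g p.1 := Fintype.sum_congr _ _ hfg
    _ = Fintype.card (ι → β) * ∑ x, f x * g x := by
        rw [Fintype.sum_prod_type, Finset.mul_sum]
        simp [Finset.sum_const, nsmul_eq_mul]

end BooleanCube

def signPoint (s : Fin d → Bool) : Fin d → ℝ := fun i => boolSign (s i)

lemma signPoint_mem_orthant (s : Fin d → Bool) : signPoint s ∈ orthant s := by
  intro i
  cases hs : s i <;> simp [signPoint, boolSign, hs]

namespace LSPD

def eval : LSPD d → (Fin d → Bool) → Bool
  | edge i b, s => s i == b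
  | series a b, s => a.eval s && b.eval s
  | parallel a b, s => a.eval s || b.eval s

lemma eval_dependsOn (Δ : LSPD d) : DependsOn Δ.eval Δ.edges := by
  induction Δ with
  | edge i b => exact fun s t h => by simp [eval, h i (by simp [edges])]
  | series a b iha ihb | parallel a b iha ihb =>
    intro s t h
    simp only [eval, iha.mono (Finset.coe_subset.mpr Finset.subset_union_left) h,
      ihb.mono (Finset.coe_subset.mpr Finset.subset_union_right) h]

lemma edges_nonempty (Δ : LSPD d) : Δ.edges.Nonempty := by
  induction Δ with
  | edge i b => simp [edges]
  | series a b iha _ => exact iha.mono Finset.subset_union_left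
  | parallel a b iha _ => exact iha.mono Finset.subset_union_left

lemma signPoint_mem_toSet_iff (Δ : LSPD d) (s : Fin d → Bool) :
    signPoint s ∈ Δ.toSet ↔ Δ.eval s := by
  induction Δ with
  | edge i b => cases b <;> cases hs : s i <;> simp [toSet, eval, signPoint, boolSign, hs]
  | series a b iha ihb => simp [toSet, eval, iha, ihb]
  | parallel a b iha ihb => simp [toSet, eval, iha, ihb]

lemma orthant_subset_toSet {Δ : LSPD d} {s : Fin d → Bool} (h : Δ.eval s) :
    orthant s ⊆ Δ.toSet := by
  induction Δ with
  | edge i b =>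
    intro x hx
    simpa [toSet, show s i = b by simpa [eval] using h] using hx i
  | series a b iha ihb =>
    simp only [eval, Bool.and_eq_true] at h
    exact Set.subset_inter (iha h.1) (ihb h.2)
  | parallel a b iha ihb =>
    simp only [eval, Bool.or_eq_true] at h
    rcases h with h | h
    · exact (iha h).trans Set.subset_union_left
    · exact (ihb h).trans Set.subset_union_right

lemma occ_toSet (Δ : LSPD d) : occ Δ.toSet = {s | Δ.eval s} :=
  Set.ext fun s => ⟨fun h => (signPoint_mem_toSet_iff Δ s).1 (h (signPoint_mem_orthant s)),
    orthant_subset_toSet⟩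

def indicator (Δ : LSPD d) (s : Fin d → Bool) : ℤ := if Δ.eval s then 1 else 0

lemma indicator_dependsOn (Δ : LSPD d) : DependsOn Δ.indicator Δ.edges :=
  fun _ _ h => by rw [indicator, indicator, Δ.eval_dependsOn h]

lemma indicator_series (a b : LSPD d) (s : Fin d → Bool) :
    (series a b).indicator s = a.indicator s * b.indicator s := by
  by_cases ha : a.eval s <;> by_cases hb : b.eval s <;> simp [indicator, eval, ha, hb]

lemma indicator_parallel (a b : LSPD d) (s : Fin d → Bool) :
    (parallel a b).indicator s = a.indicator s + b.indicator s - a.indicator s * b.indicator s := by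
  by_cases ha : a.eval s <;> by_cases hb : b.eval s <;> simp [indicator, eval, ha, hb]

def signedIndicator (Δ : LSPD d) (s : Fin d → Bool) : ℤ := Δ.indicator s * signChar Δ.edges s

lemma signedIndicator_dependsOn (Δ : LSPD d) : DependsOn Δ.signedIndicator Δ.edges :=
  fun _ _ h => by
    rw [signedIndicator, signedIndicator, Δ.indicator_dependsOn h, signChar_dependsOn _ h]

lemma two_mul_signedIndicator_edge (i : Fin d) (b : Bool) (s : Fin d → Bool) :
    2 * (edge i b).signedIndicator s = boolSign b + signChar {i} s := by
  cases b <;> cases hs : s i <;>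
    simp [signedIndicator, indicator, eval, edges, signChar, boolSign, hs]

lemma two_mul_sum_signedIndicator_edge (i : Fin d) (b : Bool) :
    2 * ∑ s, (edge i b).signedIndicator s = 2 ^ d * (edge i b).tau := by
  have hchar : ∑ s, signChar {i} s = 0 := by
    simpa using sum_mul_signChar_eq_zero (dependsOn_const (1 : ℤ)) (Finset.mem_singleton_self i)
      (Set.notMem_empty i)
  rw [Finset.mul_sum, Fintype.sum_congr _ _ (two_mul_signedIndicator_edge i b),
    Finset.sum_add_distrib, hchar]
  simp [tau, boolSign]

lemma signedIndicator_series {a b : LSPD d} (hab : Disjoint a.edges b.edges) (s : Fin d → Bool) :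
    (series a b).signedIndicator s = a.signedIndicator s * b.signedIndicator s := by
  rw [signedIndicator, indicator_series, edges, signChar_union hab, signedIndicator,
    signedIndicator]
  ring

lemma sum_signedIndicator_parallel {a b : LSPD d} (hab : Disjoint a.edges b.edges) :
    ∑ s, (parallel a b).signedIndicator s = -∑ s, a.signedIndicator s * b.signedIndicator s := by
  have hsplit : ∀ s, (parallel a b).signedIndicator s =
      a.indicator s * signChar (a.edges ∪ b.edges) s +
        b.indicator s * signChar (a.edges ∪ b.edges) s -
          a.signedIndicator s * b.signedIndicator s := fun s => by
    rw [signedIndicator, indicator_parallel, edges, signedIndicator, signedIndicator,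
      signChar_union hab]
    ring
  obtain ⟨i, hi⟩ := b.edges_nonempty
  obtain ⟨j, hj⟩ := a.edges_nonempty
  have ha : ∑ s, a.indicator s * signChar (a.edges ∪ b.edges) s = 0 :=
    sum_mul_signChar_eq_zero a.indicator_dependsOn (Finset.mem_union_right _ hi)
      (Finset.disjoint_right.mp hab hi)
  have hb : ∑ s, b.indicator s * signChar (a.edges ∪ b.edges) s = 0 :=
    sum_mul_signChar_eq_zero b.indicator_dependsOn (Finset.mem_union_left _ hj)
      (Finset.disjoint_left.mp hab hj)
  rw [Fintype.sum_congr _ _ hsplit, Finset.sum_sub_distrib, Finset.sum_add_distrib, ha, hb,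
    zero_add, zero_sub]

lemma two_pow_mul_sum_signedIndicator_mul {a b : LSPD d} (hab : Disjoint a.edges b.edges)
    {x y : ℤ} (ha : 2 ^ a.edges.card * ∑ s, a.signedIndicator s = 2 ^ d * x)
    (hb : 2 ^ b.edges.card * ∑ s, b.signedIndicator s = 2 ^ d * y) :
    2 ^ (a.edges.card + b.edges.card) * ∑ s, a.signedIndicator s * b.signedIndicator s =
      2 ^ d * (x * y) := by
  have hindep := sum_mul_sum_of_dependsOn_of_disjoint a.signedIndicator_dependsOn
    b.signedIndicator_dependsOn (Finset.disjoint_coe.mpr hab)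
  simp only [Fintype.card_fun, Fintype.card_bool, Fintype.card_fin, Nat.cast_pow,
    Nat.cast_ofNat] at hindep
  apply mul_left_cancel₀ (pow_ne_zero d two_ne_zero : (2 : ℤ) ^ d ≠ 0)
  calc 2 ^ d * (2 ^ (a.edges.card + b.edges.card) *
        ∑ s, a.signedIndicator s * b.signedIndicator s)
      = (2 ^ a.edges.card * ∑ s, a.signedIndicator s) *
          (2 ^ b.edges.card * ∑ s, b.signedIndicator s) := by
        rw [pow_add, mul_mul_mul_comm, hindep]
        ring
    _ = 2 ^ d * (2 ^ d * (x * y)) := by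
        rw [ha, hb]
        ring

theorem two_pow_card_edges_mul_sum_signedIndicator :
    ∀ {Δ : LSPD d}, Δ.ReadOnce → 2 ^ Δ.edges.card * ∑ s, Δ.signedIndicator s = 2 ^ d * Δ.tau
  | edge i b, _ => by simpa [edges] using two_mul_sum_signedIndicator_edge i b
  | series a b, ⟨ha, hb, hab⟩ => by
    rw [edges, Finset.card_union_of_disjoint hab,
      Fintype.sum_congr _ _ (signedIndicator_series hab), tau]
    exact two_pow_mul_sum_signedIndicator_mul hab
      (two_pow_card_edges_mul_sum_signedIndicator ha)
      (two_pow_card_edges_mul_sum_signedIndicator hb)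
  | parallel a b, ⟨ha, hb, hab⟩ => by
    rw [edges, Finset.card_union_of_disjoint hab, sum_signedIndicator_parallel hab, tau, mul_neg,
      mul_neg, two_pow_mul_sum_signedIndicator_mul hab
        (two_pow_card_edges_mul_sum_signedIndicator ha)
        (two_pow_card_edges_mul_sum_signedIndicator hb)]

lemma finsum_occ_toSet_orthSign (Δ : LSPD d) :
    ∑ᶠ s ∈ occ Δ.toSet, orthSign s = ∑ s, Δ.indicator s * signChar Finset.univ s := by
  rw [finsum_mem_def, finsum_eq_sum_of_fintype]
  refine Fintype.sum_congr _ _ fun s => ?_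
  by_cases hs : Δ.eval s <;> simp [occ_toSet, indicator, hs, orthSign, signChar, boolSign]

end LSPD

/-- for a floral arrangement determined by a signed read-once diagram
    with k edges, the signed orthant count τ_d equals τ(Δ,s) if k = d and 0 if k < d. -/
theorem floral_signed_orthant_count {d : ℕ} (Δ : LSPD d) (h : Δ.ReadOnce) :
    (∑ᶠ s ∈ occ Δ.toSet, orthSign s) = if Δ.edges.card = d then Δ.tau else 0 := by
  rw [Δ.finsum_occ_toSet_orthSign]
  split_ifs with hcard
  · have huniv : Δ.edges = Finset.univ := Finset.eq_univ_of_card _ (by simpa using hcard)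
    have hsum := LSPD.two_pow_card_edges_mul_sum_signedIndicator h
    rw [hcard] at hsum
    simp only [LSPD.signedIndicator, huniv] at hsum
    exact mul_left_cancel₀ (pow_ne_zero d two_ne_zero) hsum
  · obtain ⟨j, hj⟩ : ∃ j, j ∉ Δ.edges := by
      by_contra! hall
      exact hcard (by simp [Finset.eq_univ_of_forall hall])
    exact sum_mul_signChar_eq_zero Δ.indicator_dependsOn (Finset.mem_univ j) hj
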